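/- Let z ∈ ℂ and let {a_n}, {z_n} be an infinite continued fraction expansion and iteration sequence of z over the Eisenstein integers 𝔈 with respect to a nearest integer algorithm, with Q-pair {p_n}, {q_n}. Suppose M > 0 is such that |a_n| ≤ M for all n ≥ 0. Then for all n ≥ 0, |q_n·z − p_n| ≥ 1/((M + 2)·|q_n|). -/

import Mathlib

/-!
Put `Eₙ = qₙ z - pₙ`, `xₙ = |zₙ - aₙ|` and `uₙ = |qₙ| |Eₙ|`. The recurrences give
`Eₙ₊₁ = -(zₙ - aₙ) Eₙ` and `|qₙ₊₁ Eₙ - qₙ Eₙ₊₁| = 1`, hence `|uₙ₊₁ - xₙ| ≤ xₙ² uₙ`.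
The Eisenstein lattice has covering radius `1/√3`, so `xₙ ≤ 1/√3`, while
`1/xₙ = |zₙ₊₁| ≤ M + 1/√3`. With these bounds the invariant `uₙ ≤ √3/2` propagates, and then
`uₙ₊₁ ≥ xₙ - (√3/2) xₙ² ≥ 1/(M + 2)`. The last inequality needs `M ≥ √3`, which holds because
`|a₁| > 1` and no Eisenstein integer has absolute value strictly between `1` and `√3`.
-/

open Complex

/-- The primitive cube root of unity ω = (−1 + √3·i)/2. -/
noncomputable def eisOmega : ℂ := (-1 + Real.sqrt 3 * Complex.I) / 2

/-- `a : ℂ` is an Eisenstein integer: `a = x + y·ω` with `x, y ∈ ℤ`. -/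
def IsEis (a : ℂ) : Prop := ∃ x y : ℤ, a = (x : ℂ) + (y : ℂ) * eisOmega

def eisForm (u v : ℝ) : ℝ := u ^ 2 - u * v + v ^ 2

lemma eisOmega_re : eisOmega.re = -1 / 2 := by
  simp [eisOmega]

lemma eisOmega_im : eisOmega.im = Real.sqrt 3 / 2 := by
  simp [eisOmega]

lemma normSq_add_mul_eisOmega (u v : ℝ) :
    normSq (u + v * eisOmega) = eisForm u v := by
  have h3 : Real.sqrt 3 ^ 2 = 3 := Real.sq_sqrt (by norm_num)
  simp only [normSq_apply, add_re, add_im, mul_re, mul_im, ofReal_re, ofReal_im,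
    eisOmega_re, eisOmega_im, eisForm]
  linear_combination (v ^ 2 / 4) * h3

lemma exists_add_mul_eisOmega_eq (w : ℂ) : ∃ s t : ℝ, (s + t * eisOmega : ℂ) = w := by
  have h3 : Real.sqrt 3 ≠ 0 := by positivity
  refine ⟨w.re + w.im / Real.sqrt 3, 2 * w.im / Real.sqrt 3, Complex.ext ?_ ?_⟩
  · simp [eisOmega_re, eisOmega_im]; ring
  · simp [eisOmega_re, eisOmega_im]; field_simp

lemma eisForm_comm (u v : ℝ) : eisForm u v = eisForm v u := by
  unfold eisForm; ring

/-- The circumradius of the triangle `0, 1, 1 + ω` is `1/√3`: the squared distances from a point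
to the vertices, weighted by its barycentric coordinates, add up to at most `1/3`. -/
lemma exists_vertex_eisForm_le {α β : ℝ} (hβ : 0 ≤ β) (hβα : β ≤ α) (hα : α ≤ 1) :
    ∃ i j : ℤ, eisForm (α - i) (β - j) ≤ 1 / 3 := by
  by_contra! h
  have h00 := h 0 0
  have h10 := h 1 0
  have h11 := h 1 1
  push_cast [eisForm] at h00 h10 h11
  nlinarith [mul_nonneg (sub_nonneg.2 hα) (sub_nonneg.2 hβα), mul_nonneg hβ (sub_nonneg.2 hα),
    sq_nonneg (α - 2 / 3), sq_nonneg (β - 1 / 3), sq_nonneg (α - β - 1 / 3)]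

lemma exists_int_eisForm_le (s t : ℝ) : ∃ x y : ℤ, eisForm (s - x) (t - y) ≤ 1 / 3 := by
  have shift (r : ℝ) (i : ℤ) : r - ((⌊r⌋ + i : ℤ) : ℝ) = Int.fract r - i := by
    push_cast [Int.fract]; ring
  rcases le_total (Int.fract t) (Int.fract s) with h | h
  · obtain ⟨i, j, hij⟩ := exists_vertex_eisForm_le (Int.fract_nonneg t) h (Int.fract_lt_one s).le
    exact ⟨⌊s⌋ + i, ⌊t⌋ + j, by rwa [shift, shift]⟩
  · obtain ⟨i, j, hij⟩ := exists_vertex_eisForm_le (Int.fract_nonneg s) h (Int.fract_lt_one t).le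
    exact ⟨⌊s⌋ + j, ⌊t⌋ + i, by rwa [shift, shift, eisForm_comm]⟩

lemma exists_isEis_norm_sub_le (w : ℂ) : ∃ b, IsEis b ∧ ‖w - b‖ ≤ 1 / Real.sqrt 3 := by
  obtain ⟨s, t, rfl⟩ := exists_add_mul_eisOmega_eq w
  obtain ⟨x, y, hxy⟩ := exists_int_eisForm_le s t
  refine ⟨x + y * eisOmega, ⟨x, y, rfl⟩, (sq_le_sq₀ (norm_nonneg _) (by positivity)).1 ?_⟩
  rw [Complex.sq_norm, show (s + t * eisOmega : ℂ) - (x + y * eisOmega)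
    = ((s - x : ℝ) : ℂ) + ((t - y : ℝ) : ℂ) * eisOmega by push_cast; ring,
    normSq_add_mul_eisOmega, div_pow, Real.sq_sqrt (by norm_num : (0 : ℝ) ≤ 3), one_pow]
  exact hxy

lemma sq_sub_mul_add_sq_ne_two {x y : ℤ} : x ^ 2 - x * y + y ^ 2 ≠ 2 := by
  have hmod4 : ∀ u v : ZMod 4, u ^ 2 - u * v + v ^ 2 ≠ 2 := by decide
  exact fun h => hmod4 x y (by exact_mod_cast congrArg (Int.cast : ℤ → ZMod 4) h)

lemma IsEis.sqrt_three_le_norm {a : ℂ} (ha : IsEis a) (h1 : 1 < ‖a‖) : Real.sqrt 3 ≤ ‖a‖ := by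
  obtain ⟨x, y, rfl⟩ := ha
  have hN : normSq (x + y * eisOmega) = ((x ^ 2 - x * y + y ^ 2 : ℤ) : ℝ) := by
    rw [show ((x : ℂ)) + y * eisOmega = ((x : ℝ) : ℂ) + ((y : ℝ) : ℂ) * eisOmega by push_cast; rfl,
      normSq_add_mul_eisOmega, eisForm]
    push_cast; ring
  rw [← Real.sqrt_sq (norm_nonneg _), Complex.sq_norm, hN]
  gcongr
  have : (1 : ℤ) < x ^ 2 - x * y + y ^ 2 := by
    have := (one_lt_sq_iff₀ (norm_nonneg _)).2 h1
    rw [Complex.sq_norm, hN] at this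
    exact_mod_cast this
  have := sq_sub_mul_add_sq_ne_two (x := x) (y := y)
  exact_mod_cast (show (3 : ℤ) ≤ _ by omega)

lemma add_mul_sq_le_sqrt_three_div_two {x u : ℝ} (hx0 : 0 ≤ x) (hx : Real.sqrt 3 * x ≤ 1)
    (hu : u ≤ Real.sqrt 3 / 2) : x + x ^ 2 * u ≤ Real.sqrt 3 / 2 := by
  have h3 : Real.sqrt 3 ^ 2 = 3 := Real.sq_sqrt (by norm_num)
  have hs : 0 < Real.sqrt 3 := by positivity
  nlinarith [mul_nonneg (sq_nonneg x) (sub_nonneg.2 hu),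
    mul_nonneg (sub_nonneg.2 hx) (by positivity : 0 ≤ 3 + Real.sqrt 3 * x)]

lemma inv_add_two_le_sub_mul_sq {M x u : ℝ} (hM : Real.sqrt 3 ≤ M) (hx : Real.sqrt 3 * x ≤ 1)
    (hxM : Real.sqrt 3 ≤ x * (Real.sqrt 3 * M + 1)) (hu : u ≤ Real.sqrt 3 / 2) :
    1 / (M + 2) ≤ x - x ^ 2 * u := by
  set s := Real.sqrt 3
  have h3 : s ^ 2 = 3 := Real.sq_sqrt (by norm_num)
  have hs : 17 / 10 ≤ s := by nlinarith [Real.sqrt_nonneg 3]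
  have hs' : s ≤ 2 := by nlinarith [Real.sqrt_nonneg 3]
  have hM2 : 0 < M + 2 := by linarith
  set t := s * M + 1
  have ht : 0 < t := by nlinarith
  -- `x ↦ x - (s/2) x²` increases on `[0, 1/s]` and is `≥ 1/(M + 2)` at `x = s/t` once `M ≥ s`;
  -- this identity (modulo `s ^ 2 = 3`) packages both facts
  have hcert : 2 * t ^ 2 * ((M + 2) * (x - s / 2 * x ^ 2) - 1)
      = (M + 2) * t * (1 - s * x) * (x * t - s) + (M + 2) * (s * M - 2) * (x * t - s)
        + (12 - 5 * s) * (M - s) + (10 * s - 17) := by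
    linear_combination (-s * M ^ 2 * x - 2 * s * M * x - M * x + 4 * M - 2 * x - 5) * h3
  have hterms : 0 ≤ (M + 2) * t * (1 - s * x) * (x * t - s) + (M + 2) * (s * M - 2) * (x * t - s)
        + (12 - 5 * s) * (M - s) + (10 * s - 17) := by
    have hsM : 2 ≤ s * M := by nlinarith
    have hxt : 0 ≤ x * t - s := by linarith
    have := mul_nonneg (mul_nonneg (mul_nonneg hM2.le ht.le) (sub_nonneg.2 hx)) hxt
    have := mul_nonneg (mul_nonneg hM2.le (sub_nonneg.2 hsM)) hxt
    have := mul_nonneg (by linarith : 0 ≤ 12 - 5 * s) (sub_nonneg.2 hM)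
    linarith
  have hmain : 1 ≤ (M + 2) * (x - s / 2 * x ^ 2) := by
    have ht2 : 0 < 2 * t ^ 2 := by positivity
    nlinarith
  rw [div_le_iff₀ hM2]
  nlinarith [mul_nonneg (sq_nonneg x) (sub_nonneg.2 hu)]

lemma inv_add_two_le_of_abs_sub_le (u x : ℕ → ℝ) {M : ℝ} (hM : Real.sqrt 3 ≤ M) (hu0 : u 0 = 0)
    (hx0 : ∀ n, 0 ≤ x n) (hx : ∀ n, Real.sqrt 3 * x n ≤ 1)
    (hxM : ∀ n, Real.sqrt 3 ≤ x n * (Real.sqrt 3 * M + 1))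
    (hstep : ∀ n, |u (n + 1) - x n| ≤ x n ^ 2 * u n) (n : ℕ) :
    1 / (M + 2) ≤ u (n + 1) := by
  have hupper : ∀ n, u n ≤ Real.sqrt 3 / 2 := by
    intro n
    induction n with
    | zero => rw [hu0]; positivity
    | succ n ih =>
      linarith [(abs_le.1 (hstep n)).2, add_mul_sq_le_sqrt_three_div_two (hx0 n) (hx n) ih]
  linarith [(abs_le.1 (hstep n)).1, inv_add_two_le_sub_mul_sq hM (hx n) (hxM n) (hupper n)]

lemma abs_norm_mul_sub_norm_le {𝕜 : Type*} [NormedField 𝕜] {Q Q' E E' f : 𝕜}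
    (hE' : E' = -f * E) (hdet : ‖Q' * E - Q * E'‖ = 1) :
    |‖Q'‖ * ‖E'‖ - ‖f‖| ≤ ‖f‖ ^ 2 * (‖Q‖ * ‖E‖) := by
  have h := abs_norm_sub_norm_le (Q' * E) (Q' * E - Q * E')
  rw [hdet, sub_sub_cancel, hE'] at h
  calc |‖Q'‖ * ‖E'‖ - ‖f‖| = ‖f‖ * |‖Q' * E‖ - 1| := by
        rw [hE', norm_mul, norm_mul, norm_neg, ← abs_norm f, ← abs_mul, abs_norm]; ring_nf
    _ ≤ ‖f‖ * ‖Q * (-f * E)‖ := by gcongr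
    _ = ‖f‖ ^ 2 * (‖Q‖ * ‖E‖) := by simp only [norm_mul, norm_neg]; ring

lemma eq_neg_mul_of_recurrence {a zs E : ℕ → ℂ} (hne : ∀ n, zs n ≠ a n)
    (hit : ∀ n, zs (n + 1) = (zs n - a n)⁻¹) (hE1 : E 1 = -(zs 0 - a 0) * E 0)
    (hErec : ∀ n, E (n + 2) = a (n + 1) * E (n + 1) + E n) (n : ℕ) :
    E (n + 1) = -(zs n - a n) * E n := by
  induction n with
  | zero => exact hE1
  | succ n ih =>
    have hf : zs n - a n ≠ 0 := sub_ne_zero.2 (hne n)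
    have hEn : E n = -zs (n + 1) * E (n + 1) := by
      rw [ih, hit, ← mul_assoc, neg_mul_neg, inv_mul_cancel₀ hf, one_mul]
    rw [hErec, hEn]; ring

lemma sub_mul_sub_eq_neg_one_pow {a p q : ℕ → ℂ} (hp0 : p 0 = 1) (hq0 : q 0 = 0) (hq1 : q 1 = 1)
    (hprec : ∀ n, p (n + 2) = a (n + 1) * p (n + 1) + p n)
    (hqrec : ∀ n, q (n + 2) = a (n + 1) * q (n + 1) + q n) (n : ℕ) :
    q (n + 1) * p n - q n * p (n + 1) = (-1) ^ n := by
  induction n with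
  | zero => simp [hp0, hq0, hq1]
  | succ n ih => rw [hprec, hqrec, pow_succ, ← ih]; ring

lemma sqrt_three_mul_norm_sub_le {w c : ℂ} (hc : ∀ b, IsEis b → ‖w - c‖ ≤ ‖w - b‖) :
    Real.sqrt 3 * ‖w - c‖ ≤ 1 := by
  obtain ⟨b, hb, hwb⟩ := exists_isEis_norm_sub_le w
  rw [← le_div_iff₀' (by positivity)]
  exact (hc b hb).trans hwb

lemma sqrt_three_le_norm_inv {f : ℂ} (hf : f ≠ 0) (h : Real.sqrt 3 * ‖f‖ ≤ 1) :
    Real.sqrt 3 ≤ ‖f⁻¹‖ := by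
  rwa [norm_inv, le_inv_comm₀ (by positivity) (norm_pos_iff.2 hf), inv_eq_one_div,
    le_div_iff₀' (by positivity)]

lemma IsEis.sqrt_three_le_norm_of_le {c w : ℂ} (hc : IsEis c) (hw : Real.sqrt 3 ≤ ‖w‖)
    (hwc : Real.sqrt 3 * ‖w - c‖ ≤ 1) : Real.sqrt 3 ≤ ‖c‖ := by
  refine hc.sqrt_three_le_norm ?_
  have h3 : Real.sqrt 3 ^ 2 = 3 := Real.sq_sqrt (by norm_num)
  have hs : 0 < Real.sqrt 3 := by positivity
  nlinarith [norm_sub_norm_le w c, norm_sub_rev w c]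

lemma sqrt_three_le_norm_mul_of_inv {f c : ℂ} {M : ℝ} (hf : f ≠ 0) (hc : ‖c‖ ≤ M)
    (hfc : Real.sqrt 3 * ‖f⁻¹ - c‖ ≤ 1) : Real.sqrt 3 ≤ ‖f‖ * (Real.sqrt 3 * M + 1) := by
  have hinv : ‖f⁻¹‖ * ‖f‖ = 1 := by rw [norm_inv, inv_mul_cancel₀ (norm_ne_zero_iff.2 hf)]
  have htri : ‖f⁻¹‖ ≤ ‖c‖ + ‖f⁻¹ - c‖ := norm_le_norm_add_norm_sub' _ _
  calc Real.sqrt 3 = Real.sqrt 3 * ‖f⁻¹‖ * ‖f‖ := by rw [mul_assoc, hinv, mul_one]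
    _ ≤ (Real.sqrt 3 * ‖c‖ + Real.sqrt 3 * ‖f⁻¹ - c‖) * ‖f‖ := by rw [← mul_add]; gcongr
    _ ≤ (Real.sqrt 3 * M + 1) * ‖f‖ := by gcongr
    _ = ‖f‖ * (Real.sqrt 3 * M + 1) := mul_comm _ _

/-- `p (n + 1)`, `q (n + 1)` stand for the paper's `pₙ`, `qₙ`. -/
theorem eisenstein_cf_error_lower_bound_of_bounded_general
    (z : ℂ) (a zs : ℕ → ℂ)
    (ha : ∀ n, IsEis (a n))
    (hz0 : zs 0 = z)
    (hnear : ∀ n, ∀ b : ℂ, IsEis b → ‖zs n - a n‖ ≤ ‖zs n - b‖)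
    (hne : ∀ n, zs n ≠ a n)
    (hit : ∀ n, zs (n + 1) = (zs n - a n)⁻¹)
    (p q : ℕ → ℂ)
    (hp0 : p 0 = 1) (hp1 : p 1 = a 0)
    (hprec : ∀ n, p (n + 2) = a (n + 1) * p (n + 1) + p n)
    (hq0 : q 0 = 0) (hq1 : q 1 = 1)
    (hqrec : ∀ n, q (n + 2) = a (n + 1) * q (n + 1) + q n)
    (hqne : ∀ n, q (n + 1) ≠ 0)
    (M : ℝ) (haM : ∀ n, ‖a n‖ ≤ M)
    :
    ∀ n : ℕ,
      1 / ((M + 2) * ‖q (n + 1)‖) ≤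
        ‖q (n + 1) * z - p (n + 1)‖ := by
  have hf (n : ℕ) : zs n - a n ≠ 0 := sub_ne_zero.2 (hne n)
  have hx (n : ℕ) : Real.sqrt 3 * ‖zs n - a n‖ ≤ 1 := sqrt_three_mul_norm_sub_le (hnear n)
  have hM : Real.sqrt 3 ≤ M := by
    refine ((ha 1).sqrt_three_le_norm_of_le ?_ (hx 1)).trans (haM 1)
    exact hit 0 ▸ sqrt_three_le_norm_inv (hf 0) (hx 0)
  have hxM (n : ℕ) : Real.sqrt 3 ≤ ‖zs n - a n‖ * (Real.sqrt 3 * M + 1) :=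
    sqrt_three_le_norm_mul_of_inv (hf n) (haM (n + 1)) (hit n ▸ hx (n + 1))
  have hE : ∀ n, q (n + 1) * z - p (n + 1) = -(zs n - a n) * (q n * z - p n) :=
    eq_neg_mul_of_recurrence (E := fun n => q n * z - p n) hne hit
      (by simp only [hp0, hp1, hq0, hq1, hz0]; ring) (fun n => by simp only [hprec, hqrec]; ring)
  have hdet (n : ℕ) : ‖q (n + 1) * (q n * z - p n) - q n * (q (n + 1) * z - p (n + 1))‖ = 1 := by
    rw [show q (n + 1) * (q n * z - p n) - q n * (q (n + 1) * z - p (n + 1))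
      = -(q (n + 1) * p n - q n * p (n + 1)) by ring,
      sub_mul_sub_eq_neg_one_pow hp0 hq0 hq1 hprec hqrec]
    simp
  intro n
  have hu := inv_add_two_le_of_abs_sub_le (fun n => ‖q n‖ * ‖q n * z - p n‖)
    (fun n => ‖zs n - a n‖) hM (by simp [hq0]) (fun n => norm_nonneg _) hx hxM
    (fun n => abs_norm_mul_sub_norm_le (hE n) (hdet n)) n
  rw [← div_div, div_le_iff₀ (norm_pos_iff.2 (hqne n))]
  exact hu.trans_eq (mul_comm _ _)

/-- If |aₙ| ≤ M for all n, then for all n ≥ 0,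
|qₙ·z − pₙ| ≥ 1/((M + 2)·|qₙ|).  (Here `p (n+1)`, `q (n+1)` denote pₙ, qₙ.) -/
theorem eisenstein_cf_error_lower_bound_of_bounded
    (z : ℂ) (a zs : ℕ → ℂ)
    (ha : ∀ n, IsEis (a n))
    (hz0 : zs 0 = z)
    (hnear : ∀ n, ∀ b : ℂ, IsEis b → ‖zs n - a n‖ ≤ ‖zs n - b‖)
    (hne : ∀ n, zs n ≠ a n)
    (hit : ∀ n, zs (n + 1) = (zs n - a n)⁻¹)
    (p q : ℕ → ℂ)
    (hp0 : p 0 = 1) (hp1 : p 1 = a 0)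
    (hprec : ∀ n, p (n + 2) = a (n + 1) * p (n + 1) + p n)
    (hq0 : q 0 = 0) (hq1 : q 1 = 1)
    (hqrec : ∀ n, q (n + 2) = a (n + 1) * q (n + 1) + q n)
    (hqne : ∀ n, q (n + 1) ≠ 0)
    (M : ℝ) (hM : 0 < M) (haM : ∀ n, ‖a n‖ ≤ M)
    :
    ∀ n : ℕ,
      1 / ((M + 2) * ‖q (n + 1)‖) ≤
        ‖q (n + 1) * z - p (n + 1)‖ :=
  eisenstein_cf_error_lower_bound_of_bounded_general z a zs ha hz0 hnear hne hit p q hp0 hp1 hprec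
    hq0 hq1 hqrec hqne M haM
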